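/- arXiv:2004.13265 — 6 statements merged into one kernel-verified Lean document; each statement's English description precedes it below -/
import Mathlib

section
/- For a choice function C on subsets of a finite contract set X satisfying C(Y) ⊆ Y for all Y, the irrelevance of rejected contracts (IRC) condition holds if and only if C is path-independent-consistent in the following sense: for all Y ⊆ X and all Z with C(Y) ⊆ Z ⊆ Y, we have C(Z) = C(Y). -/
open Finset

section

variable {X : Type*} [DecidableEq X]

/-- Irrelevance of rejected contracts. -/
def IsIRC (C : Finset X → Finset X) : Prop :=
  ∀ (Y : Finset X) (z : X), z ∉ Y → z ∉ C (insert z Y) → C Y = C (insert z Y)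

def IsConsistent (C : Finset X → Finset X) : Prop :=
  ∀ Y Z : Finset X, C Y ⊆ Z → Z ⊆ Y → C Z = C Y

theorem IsIRC.choice_erase {C : Finset X → Finset X} (hIRC : IsIRC C) {Y : Finset X} {z : X}
    (hzY : z ∈ Y) (hzC : z ∉ C Y) : C (Y.erase z) = C Y := by
  rw [← insert_erase hzY] at hzC ⊢
  rw [erase_insert (notMem_erase z Y)]
  exact hIRC _ z (notMem_erase z Y) hzC

/-- Rejected contracts are discarded one at a time, each step justified by IRC. -/
theorem IsIRC.isConsistent {C : Finset X → Finset X} (hIRC : IsIRC C) : IsConsistent C := by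
  intro Y
  induction Y using Finset.strongInduction with
  | H Y ih =>
    intro Z hCZ hZY
    rcases hZY.eq_or_ssubset with rfl | hZY
    · rfl
    obtain ⟨z, hzY, hzZ⟩ := exists_of_ssubset hZY
    have hErase : C (Y.erase z) = C Y := hIRC.choice_erase hzY fun h => hzZ (hCZ h)
    have hZErase : Z ⊆ Y.erase z := subset_erase.2 ⟨hZY.subset, hzZ⟩
    rw [← hErase] at hCZ ⊢
    exact ih _ (erase_ssubset hzY) Z hCZ hZErase

theorem IsConsistent.isIRC {C : Finset X → Finset X} (hC : ∀ Y, C Y ⊆ Y)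
    (hCons : IsConsistent C) : IsIRC C := by
  intro Y z _ hzC
  refine hCons (insert z Y) Y (fun x hx => ?_) (subset_insert z Y)
  exact mem_of_mem_insert_of_ne (hC _ hx) (ne_of_mem_of_not_mem hx hzC)

end

variable {X : Type*} [DecidableEq X] [Fintype X]

/-- IRC holds iff the choice rule is consistent: removing any contracts that were not
chosen (while keeping all chosen ones) does not change the choice. -/
theorem irc_iff_consistent (C : Finset X → Finset X) (hC : ∀ Y, C Y ⊆ Y) :
    (∀ (Y : Finset X) (z : X), z ∉ Y → z ∉ C (insert z Y) → C Y = C (insert z Y)) ↔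
      (∀ Y Z : Finset X, C Y ⊆ Z → Z ⊆ Y → C Z = C Y) :=
  ⟨IsIRC.isConsistent, IsConsistent.isIRC hC⟩
end

section
/- If a choice function C satisfies substitutability and IRC, then C satisfies the following rejection monotonicity: for all Y ⊆ Y' ⊆ X, the rejected set R(Y) = Y \ C(Y) satisfies R(Y) ⊆ R(Y'). -/
open Finset
variable {X : Type*} [DecidableEq X] [Fintype X]

theorem Finset.monotone_of_le_insert {α β : Type*} [DecidableEq α] [Preorder β]
    {f : Finset α → β} (h : ∀ s a, f s ≤ f (insert a s)) : Monotone f := by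
  intro s t hst
  have grow : ∀ u : Finset α, f s ≤ f (u ∪ s) := by
    intro u
    induction u using Finset.induction_on with
    | empty => rw [empty_union]
    | insert a u _ ih => exact ih.trans (insert_union a u s ▸ h (u ∪ s) a)
  simpa only [sdiff_union_of_subset hst] using grow (t \ s)

theorem sdiff_subset_insert_sdiff_of_substitutable {α : Type*} [DecidableEq α]
    (C : Finset α → Finset α)
    (hsub : ∀ (Y : Finset α) (z z' : α), z ∉ C (insert z Y) → z ∉ C (insert z' (insert z Y)))
    (W : Finset α) (a : α) : W \ C W ⊆ insert a W \ C (insert a W) := by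
  intro x hx
  obtain ⟨hxW, hxC⟩ := mem_sdiff.mp hx
  have hW : insert x W = W := insert_eq_of_mem hxW
  refine mem_sdiff.mpr ⟨mem_insert_of_mem hxW, ?_⟩
  simpa only [hW] using hsub W x a (by rwa [hW])

theorem rejection_monotone_general (C : Finset X → Finset X)
    (hsub : ∀ (Y : Finset X) (z z' : X), z ∉ C (insert z Y) → z ∉ C (insert z' (insert z Y))) :
    ∀ Y Y' : Finset X, Y ⊆ Y' → Y \ C Y ⊆ Y' \ C Y' :=
  fun _ _ hYY' =>
    Finset.monotone_of_le_insert (sdiff_subset_insert_sdiff_of_substitutable C hsub) hYY'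

/-- Substitutability plus IRC implies rejection monotonicity. -/
theorem rejection_monotone (C : Finset X → Finset X) (hC : ∀ Y, C Y ⊆ Y)
    (hsub : ∀ (Y : Finset X) (z z' : X), z ∉ C (insert z Y) → z ∉ C (insert z' (insert z Y)))
    (hirc : ∀ (Y : Finset X) (z : X), z ∉ Y → z ∉ C (insert z Y) → C Y = C (insert z Y)) :
    ∀ Y Y' : Finset X, Y ⊆ Y' → Y \ C Y ⊆ Y' \ C Y' :=
  rejection_monotone_general C hsub
end

section
/- Consider a choice rule C̄ defined by processing a finite sequence of k slots, where each slot j has a linear priority order Π_j over contracts-plus-null and selects the Π_j-maximal contract among those not yet selected by earlier slots (selecting the null contract ∅ if no contract is acceptable). Then C̄ satisfies the law of aggregate demand: for all Y ⊆ Y', |C̄(Y)| ≤ |C̄(Y')|. -/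
/-!
Since priorities are strict, a slot facing more offers either picks the same contract as before or
one that was not on offer before (possibly where it previously picked `∅`). In both cases the offers
left for the later slots still contain the old ones, and the slot holds a contract whenever it did
before; induction on the list of slots finishes the proof.
-/

open Finset
variable {X : Type*} [DecidableEq X] [Fintype X]

/-- From an offer set `Y`, select the `π`-maximal element of `Y ∪ {∅}`
(`none` plays the role of the null contract; higher `π`-value = higher priority). -/
noncomputable def pick (π : Option X → ℕ) (Y : Finset X) : Option X :=
  (((insert (none : Option X) (Y.image some)).toList).argmax π).join

/-- Slot-sequential choice: each slot selects the priority-maximal remaining contract. -/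
noncomputable def chosen : List (Option X → ℕ) → Finset X → Finset X
  | [], _ => ∅
  | π :: L, Y =>
    match pick π Y with
    | none => chosen L Y
    | some x => insert x (chosen L (Y.erase x))

/-- Remaining contracts after all slots in the list have selected. -/
noncomputable def remain : List (Option X → ℕ) → Finset X → Finset X
  | [], Y => Y
  | π :: L, Y =>
    match pick π Y with
    | none => remain L Y
    | some x => remain L (Y.erase x)


section

variable {α : Type*} [DecidableEq α]

/-- `Y ∪ {∅}`, the set over which `pick` maximises. -/
def withNull (Y : Finset α) : Finset (Option α) := insert none (Y.image some)

lemma withNull_mono {Y Y' : Finset α} (h : Y ⊆ Y') : withNull Y ⊆ withNull Y' :=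
  insert_subset_insert _ (image_subset_image h)

lemma argmax_withNull (π : Option α → ℕ) (Y : Finset α) :
    (withNull Y).toList.argmax π = some (pick π Y) := by
  obtain ⟨a, ha⟩ : ∃ a, (withNull Y).toList.argmax π = some a :=
    Option.ne_none_iff_exists'.mp (by simp [List.argmax_eq_none, withNull])
  rw [ha, pick, ← withNull, ha, Option.join_some]

lemma pick_mem_withNull (π : Option α → ℕ) (Y : Finset α) : pick π Y ∈ withNull Y :=
  mem_toList.mp (List.argmax_mem (argmax_withNull π Y))

lemma le_pick (π : Option α → ℕ) {Y : Finset α} {a : Option α} (ha : a ∈ withNull Y) :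
    π a ≤ π (pick π Y) :=
  List.le_of_mem_argmax (mem_toList.mpr ha) (argmax_withNull π Y)

lemma mem_of_pick_eq_some {π : Option α → ℕ} {Y : Finset α} {x : α} (h : pick π Y = some x) :
    x ∈ Y := by
  simpa [withNull, h] using pick_mem_withNull π Y

lemma pick_eq_of_pick_mem {π : Option α → ℕ} (hπ : Function.Injective π) {Y Y' : Finset α}
    (h : Y ⊆ Y') (hmem : pick π Y' ∈ withNull Y) : pick π Y = pick π Y' :=
  hπ <| le_antisymm (le_pick π (withNull_mono h (pick_mem_withNull π Y))) (le_pick π hmem)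

lemma pick_eq_none_of_subset {π : Option α → ℕ} (hπ : Function.Injective π) {Y Y' : Finset α}
    (h : Y ⊆ Y') (h' : pick π Y' = none) : pick π Y = none :=
  h' ▸ pick_eq_of_pick_mem hπ h (h' ▸ mem_insert_self none _)

lemma pick_eq_some_of_subset {π : Option α → ℕ} (hπ : Function.Injective π) {Y Y' : Finset α}
    (h : Y ⊆ Y') {y : α} (hy : y ∈ Y) (h' : pick π Y' = some y) : pick π Y = some y :=
  h' ▸ pick_eq_of_pick_mem hπ h (h' ▸ mem_insert_of_mem (mem_image_of_mem some hy))

lemma chosen_cons_of_pick_eq_none {π : Option α → ℕ} {L : List (Option α → ℕ)} {Y : Finset α}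
    (h : pick π Y = none) : chosen (π :: L) Y = chosen L Y := by
  simp only [chosen, h]

lemma chosen_subset (L : List (Option α → ℕ)) (Y : Finset α) : chosen L Y ⊆ Y := by
  induction L generalizing Y with
  | nil => exact empty_subset Y
  | cons π L ih =>
    cases hY : pick π Y with
    | none => simpa only [chosen, hY] using ih Y
    | some x =>
      simp only [chosen, hY]
      exact insert_subset (mem_of_pick_eq_some hY) ((ih _).trans (erase_subset x Y))

lemma card_chosen_cons_of_pick_eq_some {π : Option α → ℕ} {L : List (Option α → ℕ)}
    {Y : Finset α} {x : α} (h : pick π Y = some x) :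
    (chosen (π :: L) Y).card = (chosen L (Y.erase x)).card + 1 := by
  simp only [chosen, h]
  exact card_insert_of_notMem fun hx => notMem_erase x Y (chosen_subset L _ hx)

end

/-- The slot-sequential choice rule satisfies the law of aggregate demand. -/
theorem chosen_lad (L : List (Option X → ℕ)) (hinj : ∀ π ∈ L, Function.Injective π)
    (Y Y' : Finset X) (h : Y ⊆ Y') : (chosen L Y).card ≤ (chosen L Y').card := by
  induction L generalizing Y Y' with
  | nil => simp only [chosen, le_refl]
  | cons π L ih =>
    have hπ := hinj π List.mem_cons_self
    replace ih := ih fun p hp => hinj p (List.mem_cons_of_mem π hp)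
    match hY : pick π Y, hY' : pick π Y' with
    | none, none =>
      rw [chosen_cons_of_pick_eq_none hY, chosen_cons_of_pick_eq_none hY']
      exact ih Y Y' h
    | none, some x' =>
      have hsub : Y ⊆ Y'.erase x' := fun y hy => mem_erase.mpr ⟨by
        rintro rfl
        simpa [hY] using pick_eq_some_of_subset hπ h hy hY', h hy⟩
      rw [chosen_cons_of_pick_eq_none hY, card_chosen_cons_of_pick_eq_some hY']
      exact (ih _ _ hsub).trans (Nat.le_succ _)
    | some x, none =>
      simp [pick_eq_none_of_subset hπ h hY'] at hY
    | some x, some x' =>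
      have hsub : Y.erase x ⊆ Y'.erase x' := fun y hy => mem_erase.mpr ⟨by
        rintro rfl
        have := pick_eq_some_of_subset hπ h (mem_of_mem_erase hy) hY'
        exact ne_of_mem_erase hy (by simpa [hY] using this.symm), h (mem_of_mem_erase hy)⟩
      rw [card_chosen_cons_of_pick_eq_some hY, card_chosen_cons_of_pick_eq_some hY']
      exact Nat.succ_le_succ (ih _ _ hsub)
end

section
/- The slot-sequential choice rule C̄ (where each slot selects the priority-maximal remaining contract, without removing other contracts of the same agent) satisfies IRC: for all Y ⊆ X and x ∈ Y \ C̄(Y), we have C̄(Y \ {x}) = C̄(Y). -/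
/-!
Removing a rejected contract `x` never changes what a slot picks: the slot's pick is a
`Π`-maximum of the remaining offers together with `∅`, and it stays maximal in any smaller
set that still contains it. So every slot picks the same contract from `Y \ {x}` as from `Y`,
and by induction over the slots `x` is never selected and `C̄(Y \ {x}) = C̄(Y)`.
-/

open Finset
variable {X : Type*} [DecidableEq X] [Fintype X]

section Pick

variable {α : Type*} [DecidableEq α]

/-- The contracts on offer to a slot, with `none` as the null contract. -/
def menu (Y : Finset α) : Finset (Option α) :=
  insert none (Y.image some)

lemma mem_menu_erase {Y : Finset α} {x : α} {o : Option α} (ho : o ∈ menu Y) (hox : o ≠ some x) :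
    o ∈ menu (Y.erase x) := by
  rcases o with _ | y
  · exact mem_insert_self _ _
  · simp_all [menu]

lemma menu_mono {Y Z : Finset α} (hZY : Z ⊆ Y) : menu Z ⊆ menu Y :=
  insert_subset_insert _ (image_subset_image hZY)

variable {π : Option α → ℕ}

lemma pick_spec (Y : Finset α) :
    pick π Y ∈ menu Y ∧ ∀ b ∈ menu Y, π b ≤ π (pick π Y) := by
  obtain ⟨m, hm⟩ : ∃ m, (menu Y).toList.argmax π = some m := by
    rw [← Option.ne_none_iff_exists', Ne, List.argmax_eq_none, toList_eq_nil]
    exact insert_ne_empty _ _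
  have hpick : pick π Y = m := by
    change ((menu Y).toList.argmax π).join = m
    rw [hm, Option.join_some]
  rw [hpick]
  exact ⟨mem_toList.mp (List.argmax_mem hm),
    fun b hb => List.le_of_mem_argmax (mem_toList.mpr hb) hm⟩

lemma pick_eq_iff (hπ : Function.Injective π) (Y : Finset α) {m : Option α} :
    pick π Y = m ↔ m ∈ menu Y ∧ ∀ b ∈ menu Y, π b ≤ π m := by
  obtain ⟨hmem, hmax⟩ := pick_spec Y
  constructor
  · rintro rfl
    exact ⟨hmem, hmax⟩
  · rintro ⟨hm, hm_max⟩
    exact hπ (le_antisymm (hm_max _ hmem) (hmax _ hm))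

/-- Independence of irrelevant alternatives for a single slot. -/
lemma pick_eq_of_subset (hπ : Function.Injective π) {Y Z : Finset α} (hZY : Z ⊆ Y)
    (h : pick π Y ∈ menu Z) : pick π Z = pick π Y :=
  (pick_eq_iff hπ Z).mpr ⟨h, fun b hb => (pick_spec Y).2 b (menu_mono hZY hb)⟩

lemma pick_erase_of_ne (hπ : Function.Injective π) {Y : Finset α} {x : α}
    (hne : pick π Y ≠ some x) : pick π (Y.erase x) = pick π Y :=
  pick_eq_of_subset hπ (erase_subset x Y) (mem_menu_erase (pick_spec Y).1 hne)

end Pick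

theorem chosen_irc_general (L : List (Option X → ℕ)) (hinj : ∀ π ∈ L, Function.Injective π)
    (Y : Finset X) (x : X) (hxr : x ∉ chosen L Y) :
    chosen L (Y.erase x) = chosen L Y := by
  induction L generalizing Y with
  | nil => rfl
  | cons π L ih =>
    have hπ : Function.Injective π := hinj π List.mem_cons_self
    have ih := ih fun p hp => hinj p (List.mem_cons_of_mem _ hp)
    cases hp : pick π Y with
    | none =>
      have hpx : pick π (Y.erase x) = none := by rw [pick_erase_of_ne hπ (by simp [hp]), hp]
      simp only [chosen, hp] at hxr
      simp only [chosen, hp, hpx, ih Y hxr]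
    | some y =>
      simp only [chosen, hp, mem_insert, not_or] at hxr
      obtain ⟨hxy, hxr⟩ := hxr
      have hpx : pick π (Y.erase x) = some y := by
        rw [pick_erase_of_ne hπ (by simp [hp, Ne.symm hxy]), hp]
      simp only [chosen, hp, hpx]
      rw [erase_right_comm, ih (Y.erase y) hxr]

/-- The slot-sequential choice rule satisfies IRC: removing a rejected contract
does not change the chosen set. -/
theorem chosen_irc (L : List (Option X → ℕ)) (hinj : ∀ π ∈ L, Function.Injective π)
    (Y : Finset X) (x : X) (hx : x ∈ Y) (hxr : x ∉ chosen L Y) :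
    chosen L (Y.erase x) = chosen L Y :=
  chosen_irc_general L hinj Y x hxr
end

section
/- For the slot-sequential choice rule C̄ with slots 1, ..., k, if Y ⊆ Y' ⊆ X, then for every slot index j, the set of remaining contracts after slot j in the process on Y is a subset of the set of remaining contracts after slot j in the process on Y'. -/
open Finset
variable {X : Type*} [DecidableEq X] [Fintype X]

/-! With injective priorities a slot picks the unique maximum of the options it is offered, so
the pick satisfies independence of irrelevant alternatives: if the contract picked from `Y'` is
still offered in `Y ⊆ Y'`, it is picked from `Y` too. Hence one slot turns `Y ⊆ Y'` into an
inclusion of remaining sets, and composing the slots gives the claim. -/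

omit [Fintype X] in
lemma pick_mem_and_forall_le (π : Option X → ℕ) (Y : Finset X) :
    pick π Y ∈ insert none (Y.image some) ∧
      ∀ o ∈ insert none (Y.image some), π o ≤ π (pick π Y) := by
  set l := (insert (none : Option X) (Y.image some)).toList
  obtain ⟨m, hm⟩ : ∃ m, l.argmax π = some m :=
    Option.ne_none_iff_exists'.mp fun h ↦ by simpa [l] using List.argmax_eq_none.mp h
  have hpick : pick π Y = m := by simp [pick, l, hm]
  rw [hpick]
  exact ⟨mem_toList.mp (List.argmax_mem hm),
    fun o ho ↦ List.le_of_mem_argmax (mem_toList.mpr ho) hm⟩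

omit [Fintype X] in
lemma pick_eq_of_subset_s6 {π : Option X → ℕ} (hπ : Function.Injective π) {Y Y' : Finset X}
    (h : Y ⊆ Y') (hmem : pick π Y' ∈ insert none (Y.image some)) : pick π Y = pick π Y' := by
  have hopt : insert none (Y.image some) ⊆ insert none (Y'.image some) :=
    insert_subset_insert _ (image_subset_image h)
  obtain ⟨hmemY, hmaxY⟩ := pick_mem_and_forall_le π Y
  exact hπ <| le_antisymm ((pick_mem_and_forall_le π Y').2 _ (hopt hmemY)) (hmaxY _ hmem)

noncomputable def step (π : Option X → ℕ) (Y : Finset X) : Finset X :=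
  match pick π Y with
  | none => Y
  | some x => Y.erase x

omit [Fintype X] in
lemma mem_step {π : Option X → ℕ} {Y : Finset X} {z : X} :
    z ∈ step π Y ↔ z ∈ Y ∧ pick π Y ≠ some z := by
  unfold step
  split <;> simp_all [and_comm, eq_comm]

omit [Fintype X] in
lemma step_monotone {π : Option X → ℕ} (hπ : Function.Injective π) : Monotone (step π) := by
  intro Y Y' h z
  simp only [mem_step]
  rintro ⟨hzY, hne⟩
  refine ⟨h hzY, fun hz ↦ hne ?_⟩
  rw [← hz]
  exact pick_eq_of_subset_s6 hπ h (by simp [hz, hzY])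

omit [Fintype X] in
lemma remain_cons (π : Option X → ℕ) (L : List (Option X → ℕ)) :
    remain (π :: L) = remain L ∘ step π := by
  funext Y
  simp only [remain, step, Function.comp_apply]
  split <;> rfl

omit [Fintype X] in
lemma remain_monotone {L : List (Option X → ℕ)} (hinj : ∀ π ∈ L, Function.Injective π) :
    Monotone (remain L) := by
  induction L with
  | nil => exact fun _ _ h ↦ h
  | cons π L ih =>
    rw [remain_cons]
    exact (ih fun π' hπ' ↦ hinj π' (.tail _ hπ')).comp (step_monotone (hinj π (.head _)))

/-- Monotonicity of remaining sets: larger offer sets leave larger remaining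
sets after every slot. -/
theorem remain_mono (L : List (Option X → ℕ)) (hinj : ∀ π ∈ L, Function.Injective π)
    (Y Y' : Finset X) (h : Y ⊆ Y') (j : ℕ) :
    remain (L.take j) Y ⊆ remain (L.take j) Y' :=
  remain_monotone (fun π hπ ↦ hinj π (List.mem_of_mem_take hπ)) h
end

section
/- In the SSPwCT choice procedure of a single branch, the number of contracts chosen from any offer set Y never exceeds the physical capacity n_b of the branch: |C^b(Y)| ≤ n_b. -/
open Finset
variable {X I : Type*} [DecidableEq X] [Fintype X] [DecidableEq I]

/-- SSPwCT run: the list consists of triples (original-slot priority, shadow-slot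
priority, transfer bit), each shadow slot immediately following its original slot.
Returns the chosen contracts together with the list of fill indicators of the
original slots.  When a contract of an agent is selected, all of that agent's
contracts are removed from consideration by later slots. -/
noncomputable def sspRun (ag : X → I) :
    List ((Option X → ℕ) × (Option X → ℕ) × Bool) → Finset X → Finset X × List Bool
  | [], _ => (∅, [])
  | (πo, πe, t) :: L, Y =>
    match pick πo Y with
    | some x =>
      let r := sspRun ag L (Y.filter (fun y => ag y ≠ ag x))
      (insert x r.1, true :: r.2)
    | none =>
      if t then
        match pick πe Y with
        | some x =>
          let r := sspRun ag L (Y.filter (fun y => ag y ≠ ag x))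
          (insert x r.1, false :: r.2)
        | none =>
          let r := sspRun ag L Y
          (r.1, false :: r.2)
      else
        let r := sspRun ag L Y
        (r.1, false :: r.2)

/-- A shadow slot is only open when its original slot stayed empty, so each pair of slots
adds at most one contract. -/
lemma exists_card_sspRun_cons_le {α ι : Type*} [DecidableEq α] [DecidableEq ι] (ag : α → ι)
    (p : (Option α → ℕ) × (Option α → ℕ) × Bool)
    (L : List ((Option α → ℕ) × (Option α → ℕ) × Bool)) (Y : Finset α) :
    ∃ Y' : Finset α, #(sspRun ag (p :: L) Y).1 ≤ #(sspRun ag L Y').1 + 1 := by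
  obtain ⟨πo, πe, t⟩ := p
  rw [sspRun]
  rcases pick πo Y with _ | x
  · cases t
    · exact ⟨Y, Nat.le_succ _⟩
    · rcases pick πe Y with _ | x
      · exact ⟨Y, Nat.le_succ _⟩
      · exact ⟨_, card_insert_le _ _⟩
  · exact ⟨_, card_insert_le _ _⟩

theorem sspRun_card_le_capacity_general (ag : X → I)
    (L : List ((Option X → ℕ) × (Option X → ℕ) × Bool)) (Y : Finset X) :
    ((sspRun ag L Y).1).card ≤ L.length := by
  induction L generalizing Y with
  | nil => simp [sspRun]
  | cons p L ih =>
    obtain ⟨Y', hY'⟩ := exists_card_sspRun_cons_le ag p L Y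
    exact hY'.trans (Nat.succ_le_succ (ih Y'))

/-- The SSPwCT choice never selects more contracts than the branch's physical
capacity, i.e. the number of original slots. -/
theorem sspRun_card_le_capacity (ag : X → I)
    (L : List ((Option X → ℕ) × (Option X → ℕ) × Bool))
    (hinj : ∀ p ∈ L, Function.Injective p.1 ∧ Function.Injective p.2.1) (Y : Finset X) :
    ((sspRun ag L Y).1).card ≤ L.length :=
  sspRun_card_le_capacity_general ag L Y
end
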